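/- With the canonical bracket $\{q_i,p_j\}_0 = \delta_{ij}$ and the second Toda bracket $\{\cdot,\cdot\}_1$ on $\mathbb{R}^{2n}$, the Toda Hamiltonian $h_2 = \sum_{i=1}^n \frac{1}{2}p_i^2 + \sum_{i=1}^{n-1} e^{q_i - q_{i+1}}$ and the function $h_1 = p_1 + \cdots + p_n$ generate the same Hamiltonian vector field: $\{h_2, f\}_0 = \{h_1, f\}_1$ for every smooth function $f$ on $\mathbb{R}^{2n}$. -/

import Mathlib

open scoped BigOperators

/-- Phase space `ℝ^{2n}` with coordinates `(q, p)`. -/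
abbrev TodaPt (n : ℕ) := (Fin n → ℝ) × (Fin n → ℝ)

/-- Partial derivative with respect to `q i`. -/
noncomputable def dq {n : ℕ} (f : TodaPt n → ℝ) (i : Fin n) (z : TodaPt n) : ℝ :=
  fderiv ℝ f z (Pi.single i 1, 0)

/-- Partial derivative with respect to `p i`. -/
noncomputable def dp {n : ℕ} (f : TodaPt n → ℝ) (i : Fin n) (z : TodaPt n) : ℝ :=
  fderiv ℝ f z (0, Pi.single i 1)

/-- The second Toda bracket on `ℝ^{2n}` in physical coordinates, determined by
`{q i, q j}₁ = -1` for `i < j`, `{q i, p i}₁ = p i`, and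
`{p (i+1), p i}₁ = exp (q i - q (i+1))`. -/
noncomputable def todaBr1 {n : ℕ} (f g : TodaPt n → ℝ) (z : TodaPt n) : ℝ :=
  (∑ i : Fin n, ∑ j : Fin n, if i < j then
      (-1 : ℝ) * (dq f i z * dq g j z - dq g i z * dq f j z) else 0)
  + (∑ i : Fin n, z.2 i * (dq f i z * dp g i z - dq g i z * dp f i z))
  + (∑ i : Fin n, ∑ j : Fin n, if (j : ℕ) = (i : ℕ) + 1 then
      Real.exp (z.1 i - z.1 j) * (dp f j z * dp g i z - dp g j z * dp f i z) else 0)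

/-- The canonical symplectic bracket on `ℝ^{2n}`: `{q i, p j}₀ = δ i j`. -/
noncomputable def todaBr0 {n : ℕ} (f g : TodaPt n → ℝ) (z : TodaPt n) : ℝ :=
  ∑ i : Fin n, (dq f i z * dp g i z - dq g i z * dp f i z)

/-- The Toda Hamiltonian `h₂ = ∑ p i ^ 2 / 2 + ∑ exp (q i - q (i+1))`. -/
noncomputable def todaH2 {n : ℕ} (z : TodaPt n) : ℝ :=
  (∑ i : Fin n, (1 / 2 : ℝ) * (z.2 i) ^ 2)
  + ∑ i : Fin n, ∑ j : Fin n, if (j : ℕ) = (i : ℕ) + 1 then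
      Real.exp (z.1 i - z.1 j) else 0

/-- The function `h₁ = ∑ p i`. -/
noncomputable def todaH1 {n : ℕ} (z : TodaPt n) : ℝ := ∑ i : Fin n, z.2 i

noncomputable def cq {n : ℕ} (k : Fin n) : TodaPt n →L[ℝ] ℝ :=
  (ContinuousLinearMap.proj k).comp (ContinuousLinearMap.fst ℝ (Fin n → ℝ) (Fin n → ℝ))

noncomputable def cp {n : ℕ} (k : Fin n) : TodaPt n →L[ℝ] ℝ :=
  (ContinuousLinearMap.proj k).comp (ContinuousLinearMap.snd ℝ (Fin n → ℝ) (Fin n → ℝ))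

@[simp] lemma cq_apply {n : ℕ} (k : Fin n) (v : TodaPt n) : cq k v = v.1 k := rfl
@[simp] lemma cp_apply {n : ℕ} (k : Fin n) (v : TodaPt n) : cp k v = v.2 k := rfl

noncomputable def DH2 {n : ℕ} (z : TodaPt n) : TodaPt n →L[ℝ] ℝ :=
  (∑ k : Fin n, z.2 k • cp k)
  + ∑ k : Fin n, ∑ j : Fin n, if (j : ℕ) = (k : ℕ) + 1 then
      Real.exp (z.1 k - z.1 j) • (cq k - cq j) else 0

lemma hasFDerivAt_todaH2 {n : ℕ} (z : TodaPt n) :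
    HasFDerivAt (todaH2 (n := n)) (DH2 z) z := by
  unfold todaH2 DH2
  apply HasFDerivAt.add
  · apply HasFDerivAt.fun_sum
    intro k _
    have h0 : HasFDerivAt (fun z : TodaPt n => z.2 k) (cp k) z := (cp k).hasFDerivAt
    have h := (h0.mul h0).const_mul (1/2 : ℝ)
    have e : (1/2:ℝ) • (z.2 k • cp k + z.2 k • cp k) = z.2 k • cp k := by
      ext v
      · simp [cp]
      · simp [cp]; ring
    rw [e] at h
    simp only [pow_two]
    exact h
  · apply HasFDerivAt.fun_sum
    intro k _
    apply HasFDerivAt.fun_sum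
    intro j _
    by_cases hc : (j : ℕ) = (k : ℕ) + 1
    · simp only [hc, if_true]
      exact (((cq k).hasFDerivAt (x := z)).sub ((cq j).hasFDerivAt)).exp
    · simp only [hc, if_false]
      exact hasFDerivAt_const 0 z

noncomputable def DH1 {n : ℕ} : TodaPt n →L[ℝ] ℝ := ∑ k : Fin n, cp k

lemma hasFDerivAt_todaH1 {n : ℕ} (z : TodaPt n) :
    HasFDerivAt (todaH1 (n := n)) (DH1 (n := n)) z := by
  have : todaH1 (n := n) = ⇑(DH1 (n := n)) := by
    funext w; simp [todaH1, DH1]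
  rw [this]
  exact (DH1 (n := n)).hasFDerivAt

lemma dq_todaH1 {n : ℕ} (i : Fin n) (z : TodaPt n) : dq todaH1 i z = 0 := by
  rw [dq, (hasFDerivAt_todaH1 z).fderiv]
  simp [DH1]

lemma dp_todaH1 {n : ℕ} (i : Fin n) (z : TodaPt n) : dp todaH1 i z = 1 := by
  rw [dp, (hasFDerivAt_todaH1 z).fderiv]
  simp [DH1, Pi.single_apply, Finset.sum_ite_eq]

lemma dp_todaH2 {n : ℕ} (i : Fin n) (z : TodaPt n) : dp todaH2 i z = z.2 i := by
  rw [dp, (hasFDerivAt_todaH2 z).fderiv]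
  simp [DH2, Pi.single_apply, Finset.sum_ite_eq, apply_ite (fun L : TodaPt n →L[ℝ] ℝ => L (0, Pi.single i (1:ℝ))), mul_comm]

lemma dq_todaH2 {n : ℕ} (i : Fin n) (z : TodaPt n) :
    dq todaH2 i z = ∑ k : Fin n, ∑ j : Fin n, if (j : ℕ) = (k : ℕ) + 1 then
      Real.exp (z.1 k - z.1 j) * ((Pi.single i 1 : Fin n → ℝ) k - (Pi.single i 1 : Fin n → ℝ) j) else 0 := by
  rw [dq, (hasFDerivAt_todaH2 z).fderiv]
  simp [DH2, apply_ite (fun L : TodaPt n →L[ℝ] ℝ => L (Pi.single i (1:ℝ), 0)), smul_eq_mul]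

/-- Bi-Hamiltonian formulation of the Toda lattice:
`{h₂, f}₀ = {h₁, f}₁` for every smooth function `f`. -/
theorem toda_biHamiltonian {n : ℕ} (f : TodaPt n → ℝ) (hf : ContDiff ℝ (⊤ : ℕ∞) f) :
    ∀ z : TodaPt n, todaBr0 todaH2 f z = todaBr1 todaH1 f z := by
  intro z
  rw [todaBr0, todaBr1]
  simp only [dq_todaH1, dp_todaH1, dq_todaH2, dp_todaH2]
  simp only [zero_mul, mul_zero, mul_one, one_mul, sub_zero, zero_sub, mul_neg, neg_zero,
    Finset.sum_const_zero, zero_add, ite_self, Finset.sum_mul, ite_mul]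
  rw [Finset.sum_sub_distrib]
  have key : (∑ i : Fin n, ∑ k : Fin n, ∑ j : Fin n,
        if (j : ℕ) = (k : ℕ) + 1 then
          Real.exp (z.1 k - z.1 j) * ((Pi.single i 1 : Fin n → ℝ) k - (Pi.single i 1 : Fin n → ℝ) j) * dp f i z
        else 0)
      = ∑ k : Fin n, ∑ j : Fin n, if (j : ℕ) = (k : ℕ) + 1 then
          Real.exp (z.1 k - z.1 j) * (dp f k z - dp f j z) else 0 := by
    rw [Finset.sum_comm]
    refine Finset.sum_congr rfl fun k _ => ?_
    rw [Finset.sum_comm]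
    refine Finset.sum_congr rfl fun j _ => ?_
    by_cases hc : (j : ℕ) = (k : ℕ) + 1
    · simp only [hc, if_true]
      have hne : j ≠ k := by intro h; rw [h] at hc; omega
      have e1 : ∀ i : Fin n,
          Real.exp (z.1 k - z.1 j) * ((Pi.single i 1 : Fin n → ℝ) k - (Pi.single i 1 : Fin n → ℝ) j) * dp f i z
          = Real.exp (z.1 k - z.1 j) * ((if k = i then dp f i z else 0) - (if j = i then dp f i z else 0)) := by
        intro i
        by_cases h1 : k = i <;> by_cases h2 : j = i <;>
          simp [Pi.single_apply, h1, h2] <;> ring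
      rw [Finset.sum_congr rfl fun i _ => e1 i]
      rw [← Finset.mul_sum, Finset.sum_sub_distrib]
      simp [Finset.sum_ite_eq, mul_sub]
    · simp [hc]
  rw [key]
  have key2 : (∑ i : Fin n, -(z.2 i * dq f i z)) = -(∑ i : Fin n, dq f i z * z.2 i) := by
    rw [← Finset.sum_neg_distrib]
    exact Finset.sum_congr rfl fun i _ => by ring
  rw [key2]
  ring
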